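/- Under the standing assumptions, ∫_ℝ ‖∂_y²φ_ℓ‖_{L^∞_y([-1,1])} dℓ ≲ ν^{-1/4}·𝓔^{1/4}·𝓓₁^{1/4}. (Second estimate of Lemma 3.3.) -/

import Mathlib

open MeasureTheory Set Filter Topology
open scoped ENNReal

noncomputable section

/-- `L²` norm over `y ∈ [-1,1]`. -/
def L2y (f : ℝ → ℂ) : ℝ := (∫ y in Set.Icc (-1 : ℝ) 1, ‖f y‖ ^ 2) ^ ((1 : ℝ) / 2)

/-- `L^∞` norm over `y ∈ [-1,1]`. -/
def Linfy (f : ℝ → ℂ) : ℝ := ⨆ y : Set.Icc (-1 : ℝ) 1, ‖f (y : ℝ)‖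

/-- `L²([-1,1])` inner product `⟨f,g⟩ = ∫ conj (f y) * g y dy`. -/
def ipy (f g : ℝ → ℂ) : ℂ :=
  ∫ y in Set.Icc (-1 : ℝ) 1, (starRingEnd ℂ) (f y) * g y

/-- The rate `λ_k`. -/
def lamf (ν k : ℝ) : ℝ :=
  if ν ≤ |k| then ν ^ ((1 : ℝ) / 3) * |k| ^ ((2 : ℝ) / 3) else ν

/-- The weight `α(k)`. -/
def alphf (ν k : ℝ) : ℝ :=
  if ν ≤ |k| then ν ^ ((2 : ℝ) / 3) * |k| ^ (-((2 : ℝ) / 3)) else 1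

/-- The weight `β(k)`. -/
def betaf (ν k : ℝ) : ℝ :=
  if ν ≤ |k| then ν ^ ((1 : ℝ) / 3) * |k| ^ (-((4 : ℝ) / 3)) else 0

/-- The frequency weight `W(k) = e^{2cλ_k t}⟨k⟩^{2m}⟨k⁻¹⟩^{2ε}`. -/
def Wf (ν m ε c t k : ℝ) : ℝ :=
  Real.exp (2 * c * lamf ν k * t) * (1 + k ^ 2) ^ m * (1 + k⁻¹ ^ 2) ^ ε

/-- `‖∇_k f‖²_{L²} = k²‖f‖²_{L²} + ‖∂_y f‖²_{L²}` (with `df = ∂_y f`). -/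
def gradSq (k : ℝ) (f df : ℝ → ℂ) : ℝ :=
  k ^ 2 * (L2y f) ^ 2 + (L2y df) ^ 2

/-- The weighted energy `𝓔`. -/
def EEn (ν m ε c t : ℝ) (ω dω : ℝ → ℝ → ℂ) : ℝ≥0∞ :=
  ∫⁻ k : ℝ, ENNReal.ofReal
    (Wf ν m ε c t k * ((L2y (ω k)) ^ 2 + alphf ν k * (L2y (dω k)) ^ 2))

/-- The dissipation functional `𝓓₁`. -/
def D1n (ν m ε c t : ℝ) (ω dω : ℝ → ℝ → ℂ) : ℝ≥0∞ :=
  ∫⁻ k : ℝ, ENNReal.ofReal (Wf ν m ε c t k * (ν * gradSq k (ω k) (dω k)))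

/-- The dissipation functional `𝓓₂`. -/
def D2n (ν m ε c t : ℝ) (dω d2ω : ℝ → ℝ → ℂ) : ℝ≥0∞ :=
  ∫⁻ k : ℝ, ENNReal.ofReal (Wf ν m ε c t k * (ν * alphf ν k * gradSq k (dω k) (d2ω k)))

/-- The dissipation functional `𝓓₃`. -/
def D3n (ν m ε c t : ℝ) (ω : ℝ → ℝ → ℂ) : ℝ≥0∞ :=
  ∫⁻ k : ℝ, ENNReal.ofReal (Wf ν m ε c t k * (lamf ν k * (L2y (ω k)) ^ 2))

/-- The dissipation functional `𝓓₄`. -/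
def D4n (ν m ε c t : ℝ) (φ dφ : ℝ → ℝ → ℂ) : ℝ≥0∞ :=
  ∫⁻ k : ℝ, ENNReal.ofReal (Wf ν m ε c t k * (k ^ 2 * gradSq k (φ k) (dφ k)))

/-- The dissipation functional `𝓓₅`. -/
def D5n (ν m ε c t : ℝ) (dφ d2φ : ℝ → ℝ → ℂ) : ℝ≥0∞ :=
  ∫⁻ k : ℝ, ENNReal.ofReal (Wf ν m ε c t k * (alphf ν k * k ^ 2 * gradSq k (dφ k) (d2φ k)))

/-!
At a frequency `k ≠ 0`, testing `∂_y²φ - k²φ = ω` against `φ` gives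
`‖∂_yφ‖² + k²‖φ‖² ≤ ‖ω‖‖φ‖`, hence `k⁴‖φ‖‖∂_yφ‖ ≤ |k|‖ω‖²`. Agmon's inequality
`‖f‖²_{L^∞} ≤ 2‖f‖‖∂_y f‖` for `ω` and `φ` then bounds `‖∂_y²φ‖_{L^∞} ≤ ‖ω‖_{L^∞} + k²‖φ‖_{L^∞}`
by `√(2‖ω‖‖∂_yω‖) + √(2|k|)‖ω‖`, and both terms are at most `√2 ν^{-1/4} W^{-1/2} E^{1/4} D^{1/4}`,
where `E` and `D` are the integrands of `𝓔` and `𝓓₁` at `k`. Integrating in `k`, Hölder's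
inequality with exponents `(2, 4, 4)` and `∫ W⁻¹ ≤ ∫ (1 + k²)⁻¹ = π` conclude.
-/

open scoped RealInnerProductSpace

/-- The encoding of "`f ∈ H¹(-1,1)` with `∂_y f = f'`" used in the hypotheses of the theorem. -/
def IsPrimitiveOn (f f' : ℝ → ℂ) : Prop :=
  ∀ y ∈ Icc (-1 : ℝ) 1, f y = f (-1) + ∫ s in (-1 : ℝ)..y, f' s

lemma L2y_nonneg (f : ℝ → ℂ) : 0 ≤ L2y f :=
  Real.rpow_nonneg (integral_nonneg fun _ => by positivity) _

lemma L2y_sq (f : ℝ → ℂ) : L2y f ^ 2 = ∫ y in Icc (-1 : ℝ) 1, ‖f y‖ ^ 2 := by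
  rw [L2y, ← Real.sqrt_eq_rpow, Real.sq_sqrt (integral_nonneg fun _ => by positivity)]

lemma measurable_L2y {ω : ℝ → ℝ → ℂ} (hω : Measurable (Function.uncurry ω)) :
    Measurable fun k => L2y (ω k) :=
  ((hω.norm.pow_const 2).stronglyMeasurable.integral_prod_right').measurable.pow_const _

lemma memLp_norm_of_continuousOn {F : ℝ → ℂ} (hF : ContinuousOn F (Icc (-1 : ℝ) 1))
    (p : ℝ≥0∞) : MemLp (fun y => ‖F y‖) p (volume.restrict (Icc (-1 : ℝ) 1)) := by
  obtain ⟨C, hC⟩ := isCompact_Icc.exists_bound_of_continuousOn hF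
  refine MemLp.of_bound (hF.aestronglyMeasurable measurableSet_Icc).norm C ?_
  filter_upwards [ae_restrict_mem measurableSet_Icc] with y hy
  simpa using hC y hy

lemma integral_norm_mul_norm_le_L2y_mul_L2y {F G : ℝ → ℂ}
    (hF : ContinuousOn F (Icc (-1 : ℝ) 1)) (hG : ContinuousOn G (Icc (-1 : ℝ) 1)) :
    ∫ y in Icc (-1 : ℝ) 1, ‖F y‖ * ‖G y‖ ≤ L2y F * L2y G := by
  simpa only [L2y, Real.rpow_two] using integral_mul_le_Lp_mul_Lq_of_nonneg
    Real.HolderConjugate.two_two (ae_of_all _ fun _ => norm_nonneg _)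
    (ae_of_all _ fun _ => norm_nonneg _) (memLp_norm_of_continuousOn hF _)
    (memLp_norm_of_continuousOn hG _)

namespace IsPrimitiveOn

variable {f f' : ℝ → ℂ}

lemma continuousOn (h : IsPrimitiveOn f f') (hf' : IntegrableOn f' (Icc (-1 : ℝ) 1)) :
    ContinuousOn f (Icc (-1 : ℝ) 1) := by
  have hprim := intervalIntegral.continuousOn_primitive_interval (a := -1) (b := 1)
    (by rwa [uIcc_of_le (by norm_num)])
  rw [uIcc_of_le (by norm_num)] at hprim
  exact (continuousOn_const.add hprim).congr h

lemma hasDerivAt (h : IsPrimitiveOn f f') (hf' : ContinuousOn f' (Icc (-1 : ℝ) 1)) {x : ℝ}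
    (hx : x ∈ Ioo (-1 : ℝ) 1) : HasDerivAt f (f' x) x := by
  have hprim : HasDerivAt (fun y => ∫ s in (-1 : ℝ)..y, f' s) (f' x) x :=
    intervalIntegral.integral_hasDerivAt_right
      ((hf'.mono (Icc_subset_Icc le_rfl hx.2.le)).intervalIntegrable_of_Icc hx.1.le)
      ((hf'.mono Ioo_subset_Icc_self).stronglyMeasurableAtFilter isOpen_Ioo x hx)
      (hf'.continuousAt (Icc_mem_nhds hx.1 hx.2))
  exact (hprim.const_add _).congr_of_eventuallyEq
    (eventually_of_mem (Icc_mem_nhds hx.1 hx.2) h)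

lemma sq_norm_le (h : IsPrimitiveOn f f') (hf' : ContinuousOn f' (Icc (-1 : ℝ) 1))
    (h0 : f (-1) = 0) {y : ℝ} (hy : y ∈ Icc (-1 : ℝ) 1) :
    ‖f y‖ ^ 2 ≤ 2 * (L2y f * L2y f') := by
  have hf := h.continuousOn hf'.integrableOn_Icc
  have hsub : Icc (-1) y ⊆ Icc (-1 : ℝ) 1 := Icc_subset_Icc le_rfl hy.2
  have hbound : IntegrableOn (fun s => 2 * (‖f s‖ * ‖f' s‖)) (Icc (-1 : ℝ) 1) :=
    (continuousOn_const.mul (hf.norm.mul hf'.norm)).integrableOn_Icc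
  have hftc : ‖f y‖ ^ 2 = ∫ s in (-1 : ℝ)..y, 2 * ⟪f s, f' s⟫ := by
    rw [intervalIntegral.integral_eq_sub_of_hasDerivAt_of_le hy.1 ((hf.mono hsub).norm.pow 2)
      (fun x hx => (h.hasDerivAt hf' ⟨hx.1, hx.2.trans_le hy.2⟩).norm_sq)
      ((continuousOn_const.mul ((hf.inner hf').mono hsub)).intervalIntegrable_of_Icc hy.1)]
    simp [h0]
  calc ‖f y‖ ^ 2 = ∫ s in Ioc (-1) y, 2 * ⟪f s, f' s⟫ := by
        rw [hftc, intervalIntegral.integral_of_le hy.1]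
    _ ≤ ∫ s in Ioc (-1) y, 2 * (‖f s‖ * ‖f' s‖) := by
      refine setIntegral_mono_on ?_ (hbound.mono_set (Ioc_subset_Icc_self.trans hsub))
        measurableSet_Ioc fun s _ => by gcongr; exact real_inner_le_norm _ _
      exact (continuousOn_const.mul (hf.inner hf')).integrableOn_Icc.mono_set
        (Ioc_subset_Icc_self.trans hsub)
    _ ≤ ∫ s in Icc (-1 : ℝ) 1, 2 * (‖f s‖ * ‖f' s‖) :=
      setIntegral_mono_set hbound (ae_of_all _ fun _ => by positivity)
        (Ioc_subset_Icc_self.trans hsub).eventuallyLE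
    _ ≤ 2 * (L2y f * L2y f') := by
      rw [integral_const_mul]
      gcongr
      exact integral_norm_mul_norm_le_L2y_mul_L2y hf hf'

end IsPrimitiveOn

lemma sq_L2y_deriv_add_le_of_poisson {k : ℝ} {ω φ dφ d2φ : ℝ → ℂ}
    (hφ : IsPrimitiveOn φ dφ) (hdφ : IsPrimitiveOn dφ d2φ)
    (hdφc : ContinuousOn dφ (Icc (-1 : ℝ) 1)) (hd2φc : ContinuousOn d2φ (Icc (-1 : ℝ) 1))
    (hφ0 : φ (-1) = 0) (hφ1 : φ 1 = 0)
    (heq : ∀ y ∈ Icc (-1 : ℝ) 1, d2φ y - (k : ℂ) ^ 2 * φ y = ω y) :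
    L2y dφ ^ 2 + k ^ 2 * L2y φ ^ 2 ≤ L2y ω * L2y φ := by
  have hφc := hφ.continuousOn hdφc.integrableOn_Icc
  have hωc : ContinuousOn ω (Icc (-1 : ℝ) 1) :=
    (hd2φc.sub (continuousOn_const.mul hφc)).congr fun y hy => (heq y hy).symm
  have hpoint : ∀ y ∈ Icc (-1 : ℝ) 1,
      ‖dφ y‖ ^ 2 + k ^ 2 * ‖φ y‖ ^ 2 - ‖ω y‖ * ‖φ y‖ ≤ ‖dφ y‖ ^ 2 + ⟪d2φ y, φ y⟫ := by
    intro y hy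
    have hd2φ : d2φ y = ω y + (k ^ 2 : ℝ) • φ y := by
      rw [Complex.real_smul, ← heq y hy]; push_cast; ring
    rw [hd2φ, inner_add_left, real_inner_smul_left, real_inner_self_eq_norm_sq]
    linarith [neg_abs_le ⟪ω y, φ y⟫, abs_real_inner_le_norm (ω y) (φ y)]
  have hftc : ∫ y in Icc (-1 : ℝ) 1, (‖dφ y‖ ^ 2 + ⟪d2φ y, φ y⟫) = 0 := by
    have hderiv : ∀ x ∈ Ioo (-1 : ℝ) 1,
        HasDerivAt (fun t => ⟪dφ t, φ t⟫) (‖dφ x‖ ^ 2 + ⟪d2φ x, φ x⟫) x := fun x hx => by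
      simpa [real_inner_self_eq_norm_sq, add_comm] using
        (hdφ.hasDerivAt hd2φc hx).inner ℝ (hφ.hasDerivAt hdφc hx)
    have hcont : ContinuousOn (fun y => ‖dφ y‖ ^ 2 + ⟪d2φ y, φ y⟫) (Icc (-1 : ℝ) 1) := by
      fun_prop
    rw [integral_Icc_eq_integral_Ioc, ← intervalIntegral.integral_of_le (by norm_num),
      intervalIntegral.integral_eq_sub_of_hasDerivAt_of_le (by norm_num) (hdφc.inner hφc) hderiv
        (hcont.intervalIntegrable_of_Icc (by norm_num))]
    simp [hφ0, hφ1]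
  have hint : ∫ y in Icc (-1 : ℝ) 1, (‖dφ y‖ ^ 2 + k ^ 2 * ‖φ y‖ ^ 2 - ‖ω y‖ * ‖φ y‖)
      = L2y dφ ^ 2 + k ^ 2 * L2y φ ^ 2 - ∫ y in Icc (-1 : ℝ) 1, ‖ω y‖ * ‖φ y‖ := by
    rw [integral_sub, integral_add, integral_const_mul, L2y_sq, L2y_sq]
    all_goals exact ContinuousOn.integrableOn_Icc (by fun_prop)
  have hmono := setIntegral_mono_on (μ := volume) (ContinuousOn.integrableOn_Icc (by fun_prop))
    (ContinuousOn.integrableOn_Icc (by fun_prop)) measurableSet_Icc hpoint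
  linarith [integral_norm_mul_norm_le_L2y_mul_L2y hωc hφc]

lemma pow_four_mul_mul_le_of_sq_add_le {a p q k : ℝ} (ha : 0 ≤ a) (hp : 0 ≤ p) (hq : 0 ≤ q)
    (h : q ^ 2 + k ^ 2 * p ^ 2 ≤ a * p) : k ^ 4 * (p * q) ≤ |k| * a ^ 2 := by
  have hkp : k ^ 2 * p ≤ a := by
    rcases hp.eq_or_lt with rfl | hp
    · simpa using ha
    · nlinarith
  have hkq : k ^ 2 * q ≤ |k| * a := by
    refine (pow_le_pow_iff_left₀ (by positivity) (by positivity) two_ne_zero).1 ?_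
    calc (k ^ 2 * q) ^ 2 = k ^ 4 * q ^ 2 := by ring
      _ ≤ k ^ 4 * (a * p) := by gcongr; nlinarith [sq_nonneg (k * p)]
      _ = k ^ 2 * a * (k ^ 2 * p) := by ring
      _ ≤ k ^ 2 * a * a := by gcongr
      _ = (|k| * a) ^ 2 := by rw [mul_pow, sq_abs]; ring
  calc k ^ 4 * (p * q) = (k ^ 2 * p) * (k ^ 2 * q) := by ring
    _ ≤ a * (|k| * a) := by gcongr
    _ = |k| * a ^ 2 := by ring

lemma Linfy_le_of_poisson {k : ℝ} {ω dω φ dφ d2φ : ℝ → ℂ}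
    (hω : IsPrimitiveOn ω dω) (hdωc : ContinuousOn dω (Icc (-1 : ℝ) 1)) (hω0 : ω (-1) = 0)
    (hφ : IsPrimitiveOn φ dφ) (hdφ : IsPrimitiveOn dφ d2φ) (hd2φm : Measurable d2φ)
    (hφ0 : φ (-1) = 0) (hφ1 : φ 1 = 0)
    (heq : ∀ y ∈ Icc (-1 : ℝ) 1, d2φ y - (k : ℂ) ^ 2 * φ y = ω y) :
    Linfy d2φ ≤ √(2 * (L2y ω * L2y dω)) + √(2 * (|k| * L2y ω ^ 2)) := by
  by_cases hbdd : BddAbove (range fun y : Icc (-1 : ℝ) 1 => ‖d2φ y‖)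
  swap
  · rw [Linfy, Real.iSup_of_not_bddAbove hbdd]
    positivity
  -- A bounded measurable `∂_y² φ` is integrable, which makes all the primitives continuous.
  obtain ⟨M, hM⟩ := hbdd
  have hd2φi : IntegrableOn d2φ (Icc (-1 : ℝ) 1) :=
    Measure.integrableOn_of_bounded (M := M) (by simp [Real.volume_Icc])
      hd2φm.aestronglyMeasurable
      ((ae_restrict_iff' measurableSet_Icc).2 (ae_of_all _ fun y hy => hM ⟨⟨y, hy⟩, rfl⟩))
  have hdφc := hdφ.continuousOn hd2φi
  have hφc := hφ.continuousOn hdφc.integrableOn_Icc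
  have hωc := hω.continuousOn hdωc.integrableOn_Icc
  have hd2φ : ∀ y ∈ Icc (-1 : ℝ) 1, d2φ y = ω y + (k : ℂ) ^ 2 * φ y := fun y hy => by
    rw [← heq y hy]; ring
  have hd2φc : ContinuousOn d2φ (Icc (-1 : ℝ) 1) :=
    (hωc.add (continuousOn_const.mul hφc)).congr hd2φ
  have hk4 := pow_four_mul_mul_le_of_sq_add_le (L2y_nonneg ω) (L2y_nonneg φ) (L2y_nonneg dφ)
    (sq_L2y_deriv_add_le_of_poisson hφ hdφ hdφc hd2φc hφ0 hφ1 heq)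
  have : Nonempty (Icc (-1 : ℝ) 1) := ⟨⟨0, by norm_num, by norm_num⟩⟩
  refine ciSup_le fun ⟨y, hy⟩ => ?_
  have hωy := hω.sq_norm_le hdωc hω0 hy
  have hφy := hφ.sq_norm_le hdφc hφ0 hy
  calc ‖d2φ y‖ ≤ ‖ω y‖ + k ^ 2 * ‖φ y‖ := by
        rw [hd2φ y hy]
        refine (norm_add_le _ _).trans_eq ?_
        simp
    _ ≤ √(2 * (L2y ω * L2y dω)) + √(2 * (|k| * L2y ω ^ 2)) := by
      gcongr
      · exact Real.le_sqrt_of_sq_le hωy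
      · refine Real.le_sqrt_of_sq_le ?_
        calc (k ^ 2 * ‖φ y‖) ^ 2 = k ^ 4 * ‖φ y‖ ^ 2 := by ring
          _ ≤ k ^ 4 * (2 * (L2y φ * L2y dφ)) := by gcongr
          _ ≤ 2 * (|k| * L2y ω ^ 2) := by linarith

lemma sqrt_two_mul_add_sqrt_two_mul_le {x y Z : ℝ} (hx : 0 ≤ x) (hy : 0 ≤ y) (hZ : 0 ≤ Z)
    (hxZ : x ^ 2 ≤ Z ^ 4) (hyZ : y ^ 2 ≤ Z ^ 4) : √(2 * x) + √(2 * y) ≤ 2 * √2 * Z := by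
  have key : ∀ u, 0 ≤ u → u ^ 2 ≤ Z ^ 4 → √(2 * u) ≤ √2 * Z := fun u hu huZ => by
    rw [Real.sqrt_mul zero_le_two]
    gcongr
    rw [Real.sqrt_le_left hZ]
    exact (pow_le_pow_iff_left₀ hu (by positivity) two_ne_zero).1 (by linarith)
  linarith [key x hx hxZ, key y hy hyZ]

lemma sqrt_add_sqrt_le_weighted {a b k ν W α : ℝ} (ha : 0 ≤ a) (hb : 0 ≤ b) (hν : 0 < ν)
    (hW : 0 < W) (hα : 0 ≤ α) :
    √(2 * (a * b)) + √(2 * (|k| * a ^ 2)) ≤ 2 * √2 * ν ^ (-(1 : ℝ) / 4) *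
      (W⁻¹ ^ ((1 : ℝ) / 2) * ((W * (a ^ 2 + α * b ^ 2)) ^ ((1 : ℝ) / 4) *
        (W * (ν * (k ^ 2 * a ^ 2 + b ^ 2))) ^ ((1 : ℝ) / 4))) := by
  set E := W * (a ^ 2 + α * b ^ 2)
  set D := W * (ν * (k ^ 2 * a ^ 2 + b ^ 2))
  have hpow : ∀ {x : ℝ} (r : ℝ), 0 ≤ x → (x ^ r) ^ 4 = x ^ (r * 4) := fun r hx =>
    (Real.rpow_mul_natCast hx r 4).symm
  have hZ4 : (ν ^ (-(1 : ℝ) / 4) * (W⁻¹ ^ ((1 : ℝ) / 2) * (E ^ ((1 : ℝ) / 4) *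
      D ^ ((1 : ℝ) / 4)))) ^ 4 = ν⁻¹ * W⁻¹ ^ 2 * (E * D) := by
    simp only [mul_pow, hpow _ hν.le, hpow _ (inv_nonneg.2 hW.le), hpow _ (by positivity : 0 ≤ E),
      hpow _ (by positivity : 0 ≤ D)]
    norm_num [Real.rpow_neg_one]
    ring
  have hE : W * a ^ 2 ≤ E :=
    mul_le_mul_of_nonneg_left (le_add_of_nonneg_right (by positivity)) hW.le
  have hDb : W * (ν * b ^ 2) ≤ D := mul_le_mul_of_nonneg_left
    (mul_le_mul_of_nonneg_left (le_add_of_nonneg_left (by positivity)) hν.le) hW.le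
  have hDa : W * (ν * (k ^ 2 * a ^ 2)) ≤ D := mul_le_mul_of_nonneg_left
    (mul_le_mul_of_nonneg_left (le_add_of_nonneg_right (by positivity)) hν.le) hW.le
  rw [mul_assoc (2 * √2)]
  refine sqrt_two_mul_add_sqrt_two_mul_le (by positivity) (by positivity) (by positivity) ?_ ?_
  all_goals rw [hZ4]
  · calc (a * b) ^ 2 = ν⁻¹ * W⁻¹ ^ 2 * ((W * a ^ 2) * (W * (ν * b ^ 2))) := by
          field_simp
      _ ≤ ν⁻¹ * W⁻¹ ^ 2 * (E * D) := by
          gcongr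
  · calc (|k| * a ^ 2) ^ 2 = ν⁻¹ * W⁻¹ ^ 2 * ((W * a ^ 2) * (W * (ν * (k ^ 2 * a ^ 2)))) := by
          field_simp
          rw [sq_abs]; ring
      _ ≤ ν⁻¹ * W⁻¹ ^ 2 * (E * D) := by
          gcongr

lemma lintegral_rpow_mul_rpow_mul_rpow_le {α : Type*} [MeasurableSpace α] {μ : Measure α}
    {w e d : α → ℝ≥0∞} (hw : AEMeasurable w μ) (he : AEMeasurable e μ) (hd : AEMeasurable d μ) :
    ∫⁻ x, w x ^ ((1 : ℝ) / 2) * (e x ^ ((1 : ℝ) / 4) * d x ^ ((1 : ℝ) / 4)) ∂μ ≤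
      (∫⁻ x, w x ∂μ) ^ ((1 : ℝ) / 2) *
        ((∫⁻ x, e x ∂μ) ^ ((1 : ℝ) / 4) * (∫⁻ x, d x ∂μ) ^ ((1 : ℝ) / 4)) := by
  have hsqrt : ∀ u v : ℝ≥0∞, (u ^ ((1 : ℝ) / 2) * v ^ ((1 : ℝ) / 2)) ^ ((1 : ℝ) / 2) =
      u ^ ((1 : ℝ) / 4) * v ^ ((1 : ℝ) / 4) := fun u v => by
    rw [ENNReal.mul_rpow_of_nonneg _ _ (by norm_num), ← ENNReal.rpow_mul, ← ENNReal.rpow_mul]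
    norm_num
  calc ∫⁻ x, w x ^ ((1 : ℝ) / 2) * (e x ^ ((1 : ℝ) / 4) * d x ^ ((1 : ℝ) / 4)) ∂μ
      = ∫⁻ x, w x ^ ((1 : ℝ) / 2) *
          (e x ^ ((1 : ℝ) / 2) * d x ^ ((1 : ℝ) / 2)) ^ ((1 : ℝ) / 2) ∂μ := by
        simp only [hsqrt]
    _ ≤ (∫⁻ x, w x ∂μ) ^ ((1 : ℝ) / 2) *
          (∫⁻ x, e x ^ ((1 : ℝ) / 2) * d x ^ ((1 : ℝ) / 2) ∂μ) ^ ((1 : ℝ) / 2) :=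
        ENNReal.lintegral_mul_norm_pow_le hw ((he.pow_const _).mul (hd.pow_const _))
          (by norm_num) (by norm_num) (by norm_num)
    _ ≤ (∫⁻ x, w x ∂μ) ^ ((1 : ℝ) / 2) *
          ((∫⁻ x, e x ∂μ) ^ ((1 : ℝ) / 2) * (∫⁻ x, d x ∂μ) ^ ((1 : ℝ) / 2)) ^ ((1 : ℝ) / 2) := by
        gcongr
        exact ENNReal.lintegral_mul_norm_pow_le he hd (by norm_num) (by norm_num) (by norm_num)
    _ = _ := by rw [hsqrt]

lemma ofReal_le_mul_rpow_mul_rpow_mul_rpow {x C W E D : ℝ} (hW : 0 < W) (hE : 0 ≤ E)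
    (hD : 0 ≤ D) (h : x ≤ C * (W⁻¹ ^ ((1 : ℝ) / 2) * (E ^ ((1 : ℝ) / 4) * D ^ ((1 : ℝ) / 4)))) :
    ENNReal.ofReal x ≤ ENNReal.ofReal C * (ENNReal.ofReal W⁻¹ ^ ((1 : ℝ) / 2) *
      (ENNReal.ofReal E ^ ((1 : ℝ) / 4) * ENNReal.ofReal D ^ ((1 : ℝ) / 4))) := by
  rw [ENNReal.ofReal_rpow_of_nonneg (inv_nonneg.2 hW.le) (by norm_num),
    ENNReal.ofReal_rpow_of_nonneg hE (by norm_num), ENNReal.ofReal_rpow_of_nonneg hD (by norm_num),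
    ← ENNReal.ofReal_mul (by positivity), ← ENNReal.ofReal_mul (by positivity),
    ← ENNReal.ofReal_mul']
  · exact ENNReal.ofReal_le_ofReal h
  · positivity

lemma alphf_nonneg {ν : ℝ} (hν : 0 ≤ ν) (k : ℝ) : 0 ≤ alphf ν k := by
  unfold alphf
  split_ifs <;> positivity

lemma Wf_pos (ν m ε c t k : ℝ) : 0 < Wf ν m ε c t k := by
  unfold Wf
  positivity

lemma one_add_sq_le_Wf {ν m ε c t : ℝ} (hν : 0 ≤ ν) (hm : 1 ≤ m) (hε : 0 ≤ ε) (hc : 0 ≤ c)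
    (ht : 0 ≤ t) (k : ℝ) : 1 + k ^ 2 ≤ Wf ν m ε c t k := by
  have hlam : 0 ≤ lamf ν k := by unfold lamf; split_ifs <;> positivity
  calc 1 + k ^ 2 = 1 * (1 + k ^ 2) ^ (1 : ℝ) * 1 := by simp
    _ ≤ Wf ν m ε c t k := by
      unfold Wf
      gcongr
      · exact Real.one_le_exp (by positivity)
      · exact le_add_of_nonneg_right (sq_nonneg k)
      · exact Real.one_le_rpow (le_add_of_nonneg_right (sq_nonneg _)) hε

lemma lintegral_inv_Wf_le_pi {ν m ε c t : ℝ} (hν : 0 ≤ ν) (hm : 1 ≤ m) (hε : 0 ≤ ε)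
    (hc : 0 ≤ c) (ht : 0 ≤ t) :
    ∫⁻ k, ENNReal.ofReal (Wf ν m ε c t k)⁻¹ ≤ ENNReal.ofReal Real.pi := by
  calc ∫⁻ k, ENNReal.ofReal (Wf ν m ε c t k)⁻¹ ≤ ∫⁻ k : ℝ, ENNReal.ofReal (1 + k ^ 2)⁻¹ :=
        lintegral_mono fun k => ENNReal.ofReal_le_ofReal <|
          inv_anti₀ (by positivity) (one_add_sq_le_Wf hν hm hε hc ht k)
    _ = ENNReal.ofReal Real.pi := by
      rw [← integral_univ_inv_one_add_sq, ofReal_integral_eq_lintegral_ofReal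
        integrable_inv_one_add_sq (ae_of_all _ fun _ => by positivity)]

lemma measurable_lamf (ν : ℝ) : Measurable (lamf ν) :=
  Measurable.ite (measurableSet_le measurable_const measurable_abs) (by fun_prop) measurable_const

@[fun_prop]
lemma measurable_alphf (ν : ℝ) : Measurable (alphf ν) :=
  Measurable.ite (measurableSet_le measurable_const measurable_abs) (by fun_prop) measurable_const

@[fun_prop]
lemma measurable_Wf (ν m ε c t : ℝ) : Measurable (Wf ν m ε c t) := by
  have := measurable_lamf ν
  unfold Wf
  fun_prop

theorem lemma33_second (m ε : ℝ) (hm : 1 < m) (hε : ε ∈ Set.Ioo (0 : ℝ) (1 / 12)) :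
    ∃ C : ℝ, 0 < C ∧
      ∀ (ν c t : ℝ), ν ∈ Set.Ioo (0 : ℝ) 1 → 0 < c → 0 ≤ t →
      ∀ (ω dω d2ω φ dφ d2φ : ℝ → ℝ → ℂ),
      Measurable (Function.uncurry ω) → Measurable (Function.uncurry dω) →
      Measurable (Function.uncurry d2ω) → Measurable (Function.uncurry φ) →
      Measurable (Function.uncurry dφ) → Measurable (Function.uncurry d2φ) →
      (∀ k : ℝ, ω k (-1) = 0 ∧ ω k 1 = 0) →
      (∀ k : ℝ, ∀ y ∈ Set.Icc (-1 : ℝ) 1,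
        ω k y = ω k (-1) + ∫ s in (-1 : ℝ)..y, dω k s) →
      (∀ k : ℝ, ∀ y ∈ Set.Icc (-1 : ℝ) 1,
        dω k y = dω k (-1) + ∫ s in (-1 : ℝ)..y, d2ω k s) →
      (∀ k : ℝ, MemLp (d2ω k) 2 (volume.restrict (Set.Icc (-1 : ℝ) 1))) →
      (∀ k : ℝ, k ≠ 0 → φ k (-1) = 0 ∧ φ k 1 = 0) →
      (∀ k : ℝ, k ≠ 0 → ∀ y ∈ Set.Icc (-1 : ℝ) 1,
        φ k y = φ k (-1) + ∫ s in (-1 : ℝ)..y, dφ k s) →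
      (∀ k : ℝ, k ≠ 0 → ∀ y ∈ Set.Icc (-1 : ℝ) 1,
        dφ k y = dφ k (-1) + ∫ s in (-1 : ℝ)..y, d2φ k s) →
      (∀ k : ℝ, k ≠ 0 → ∀ y ∈ Set.Icc (-1 : ℝ) 1,
        d2φ k y - (k : ℂ) ^ 2 * φ k y = ω k y) →
      EEn ν m ε c t ω dω ≠ ⊤ → D1n ν m ε c t ω dω ≠ ⊤ → D2n ν m ε c t dω d2ω ≠ ⊤ →
      D3n ν m ε c t ω ≠ ⊤ → D4n ν m ε c t φ dφ ≠ ⊤ → D5n ν m ε c t dφ d2φ ≠ ⊤ →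
      ∫⁻ l : ℝ, ENNReal.ofReal (Linfy (d2φ l)) ≤
        ENNReal.ofReal (C * ν ^ (-(1 : ℝ) / 4)) * (EEn ν m ε c t ω dω) ^ ((1 : ℝ) / 4) *
          (D1n ν m ε c t ω dω) ^ ((1 : ℝ) / 4) := by
  refine ⟨2 * √2 * √Real.pi, by positivity, ?_⟩
  intro ν c t hν hc ht ω dω d2ω φ dφ d2φ hωm hdωm _ _ _ hd2φm hω0 hω hdω hd2ω hφ0 hφ hdφ heq
    _ _ _ _ _ _
  obtain ⟨hν0, -⟩ := hν
  set W := Wf ν m ε c t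
  set E := fun k => W k * (L2y (ω k) ^ 2 + alphf ν k * L2y (dω k) ^ 2)
  set D := fun k => W k * (ν * (k ^ 2 * L2y (ω k) ^ 2 + L2y (dω k) ^ 2))
  set C := 2 * √2 * ν ^ (-(1 : ℝ) / 4)
  have hpointwise : ∀ᵐ k, ENNReal.ofReal (Linfy (d2φ k)) ≤ ENNReal.ofReal C *
      (ENNReal.ofReal (W k)⁻¹ ^ ((1 : ℝ) / 2) *
        (ENNReal.ofReal (E k) ^ ((1 : ℝ) / 4) * ENNReal.ofReal (D k) ^ ((1 : ℝ) / 4))) := by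
    filter_upwards [Measure.ae_ne volume 0] with k hk
    have hWk : 0 < W k := Wf_pos ν m ε c t k
    have hαk := alphf_nonneg hν0.le k
    exact ofReal_le_mul_rpow_mul_rpow_mul_rpow hWk (by positivity) (by positivity)
      ((Linfy_le_of_poisson (hω k) (IsPrimitiveOn.continuousOn (hdω k)
        ((hd2ω k).integrable one_le_two)) (hω0 k).1 (hφ k hk) (hdφ k hk) hd2φm.of_uncurry_left
        (hφ0 k hk).1 (hφ0 k hk).2 (heq k hk)).trans
        (sqrt_add_sqrt_le_weighted (L2y_nonneg _) (L2y_nonneg _) hν0 hWk hαk))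
  have hωL2 := measurable_L2y hωm
  have hdωL2 := measurable_L2y hdωm
  calc ∫⁻ l, ENNReal.ofReal (Linfy (d2φ l))
      ≤ ENNReal.ofReal C * ((∫⁻ k, ENNReal.ofReal (W k)⁻¹) ^ ((1 : ℝ) / 2) *
          (EEn ν m ε c t ω dω ^ ((1 : ℝ) / 4) * D1n ν m ε c t ω dω ^ ((1 : ℝ) / 4))) := by
        refine (lintegral_mono_ae hpointwise).trans ?_
        rw [lintegral_const_mul' _ _ ENNReal.ofReal_ne_top]
        gcongr
        exact lintegral_rpow_mul_rpow_mul_rpow_le (by fun_prop) (by fun_prop) (by fun_prop)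
    _ ≤ ENNReal.ofReal C * (ENNReal.ofReal Real.pi ^ ((1 : ℝ) / 2) *
          (EEn ν m ε c t ω dω ^ ((1 : ℝ) / 4) * D1n ν m ε c t ω dω ^ ((1 : ℝ) / 4))) := by
        gcongr
        exact lintegral_inv_Wf_le_pi hν0.le hm.le hε.1.le hc.le ht
    _ = _ := by
        rw [ENNReal.ofReal_rpow_of_nonneg Real.pi_pos.le (by norm_num), ← Real.sqrt_eq_rpow,
          ← mul_assoc, ← mul_assoc, ← ENNReal.ofReal_mul (by positivity)]
        congr 3
        ring

end
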